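/- arXiv:2107.07037 — 5 statements merged into one kernel-verified Lean document; each statement's English description precedes it below -/
import Mathlib

section
/- Let G be a finite connected, locally connected graph and let C be a cycle in G. Then for every vertex w of C that has a neighbor outside C there exist vertices v and z (depending on w) such that v ∈ N(w) \ V(C), z ∈ V(C), and both wz and vz are edges of G. -/
/-
Local connectivity at `w` gives a path inside `N(w)` from a neighbor of `w` off the cycle to a
neighbor of `w` on the cycle (its neighbor along the cycle). The first edge of that path which
enters the cycle is the required edge `vz`.
-/

open SimpleGraph

def InGClass {V : Type*} (G : SimpleGraph V) (k : ℕ) : Prop :=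
  G.Connected ∧ (∀ v : V, (G.neighborSet v).ncard = k) ∧
    ∀ u : V, {v : V | G.dist u v = 2}.ncard ≤ k

def IsTConnectedGraph {V : Type*} (G : SimpleGraph V) (t : ℕ) : Prop :=
  t < Nat.card V ∧ ∀ s : Set V, s.ncard < t → (G.induce sᶜ).Connected

def GraphLocallyConnected {V : Type*} (G : SimpleGraph V) : Prop :=
  ∀ v : V, (G.induce (G.neighborSet v)).Connected

def GraphClawFree {V : Type*} (G : SimpleGraph V) : Prop :=
  IsEmpty (completeBipartiteGraph (Fin 1) (Fin 3) ↪g G)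

theorem SimpleGraph.Walk.exists_adj_mem_support {V : Type*} {G : SimpleGraph V} {a b : V}
    (p : G.Walk a b) (hp : ¬p.Nil) {w : V} (hw : w ∈ p.support) :
    ∃ x ∈ p.support, G.Adj w x := by
  induction p with
  | nil => exact absurd Walk.Nil.nil hp
  | @cons u v _ huv q ih =>
    rcases List.mem_cons.mp hw with rfl | hwq
    · exact ⟨v, by simp, huv⟩
    by_cases hq : q.Nil
    · obtain rfl : w = v := by simpa [Walk.nil_iff_support_eq.mp hq] using hwq
      exact ⟨u, by simp, huv.symm⟩
    · obtain ⟨x, hx, hwx⟩ := ih hq hwq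
      exact ⟨x, List.mem_cons_of_mem _ hx, hwx⟩

theorem GraphLocallyConnected.exists_adj_adj_of_adj_notMem_of_adj_mem {V : Type*}
    {G : SimpleGraph V} (hlc : GraphLocallyConnected G) {S : Set V} {w u x : V}
    (hwu : G.Adj w u) (hu : u ∉ S) (hwx : G.Adj w x) (hx : x ∈ S) :
    ∃ v z : V, G.Adj w v ∧ v ∉ S ∧ z ∈ S ∧ G.Adj w z ∧ G.Adj v z := by
  obtain ⟨q⟩ := hlc w ⟨u, hwu⟩ ⟨x, hwx⟩
  obtain ⟨⟨⟨v, z⟩, hvz⟩, -, hv, hz⟩ :=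
    q.exists_boundary_dart {y | (y : V) ∉ S} hu (not_not.mpr hx)
  exact ⟨v, z, v.2, hv, not_not.mp hz, z.2, hvz⟩

theorem stmt_2_general {V : Type*} (G : SimpleGraph V)
    (hlc : GraphLocallyConnected G)
    (c : V) (p : G.Walk c c) (hp : p.IsCycle)
    (w : V) (hw : w ∈ p.support) (hout : ∃ u : V, G.Adj w u ∧ u ∉ p.support) :
    ∃ v z : V, G.Adj w v ∧ v ∉ p.support ∧ z ∈ p.support ∧ G.Adj w z ∧ G.Adj v z := by
  obtain ⟨u, hwu, hu⟩ := hout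
  obtain ⟨x, hx, hwx⟩ := p.exists_adj_mem_support hp.not_nil hw
  exact hlc.exists_adj_adj_of_adj_notMem_of_adj_mem (S := {y | y ∈ p.support}) hwu hu hwx hx

/-- In a finite connected, locally connected graph, for every vertex `w` of a
cycle `C` having a neighbor outside `C`, there are vertices `v ∈ N(w) \ V(C)` and `z ∈ V(C)`
with `wz` and `vz` edges of `G`. -/
theorem stmt_2 {V : Type*} [Fintype V] (G : SimpleGraph V)
    (hconn : G.Connected) (hlc : GraphLocallyConnected G)
    (c : V) (p : G.Walk c c) (hp : p.IsCycle)
    (w : V) (hw : w ∈ p.support) (hout : ∃ u : V, G.Adj w u ∧ u ∉ p.support) :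
    ∃ v z : V, G.Adj w v ∧ v ∉ p.support ∧ z ∈ p.support ∧ G.Adj w z ∧ G.Adj v z :=
  stmt_2_general G hlc c p hp w hw hout
end

section
/- Let G be a finite graph, let r ≥ 1 and t ≥ 2 be integers, and suppose every ball of radius r in G is t-connected. Then for every integer r' > r, every ball of radius r' in G is t-connected. -/
open SimpleGraph

/-!
It suffices to pass from radius `ρ ≥ 1` to `ρ + 1`. Remove a set `S` of fewer than `t` vertices
from `B_{ρ+1}(u)`. The rest `B_ρ(u) \ S` of the inner ball is connected, and every remaining `x` at
distance `ρ + 1` is joined to it inside `B_{ρ+1}(u) \ S`: if `v` is the neighbour of `u` on a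
geodesic to `x`, then `B_ρ(v) ⊆ B_{ρ+1}(u)` contains `x` and `u` and stays connected after removing
`S \ {u}`, and on a walk from `x` to `u` there, the vertex just before the first visit to `u` is a
neighbour of `u`, hence lies in `B_ρ(u)` because `ρ ≥ 1`.
-/

namespace SimpleGraph

variable {V : Type*} {G : SimpleGraph V}

/-- As `G.dist u x = 0` when `x` is not reachable from `u`, this also contains every vertex outside
the component of `u`. -/
def distBall (G : SimpleGraph V) (u : V) (ρ : ℕ) : Set V :=
  {x | G.dist u x ≤ ρ}

lemma distBall_mono (u : V) {ρ ρ' : ℕ} (h : ρ ≤ ρ') : G.distBall u ρ ⊆ G.distBall u ρ' :=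
  fun _ hx => le_trans hx h

lemma self_mem_distBall (u : V) (ρ : ℕ) : u ∈ G.distBall u ρ := by
  simp [distBall]

lemma distBall_subset_distBall_succ_of_adj {u v : V} (huv : G.Adj u v) (ρ : ℕ) :
    G.distBall v ρ ⊆ G.distBall u (ρ + 1) := fun z hz => by
  have := huv.reachable.dist_triangle_left z
  simp only [distBall, Set.mem_ofPred_eq, dist_eq_one_iff_adj.2 huv] at *
  omega

lemma mem_distBall_of_adj {u y : V} (huy : G.Adj u y) {ρ : ℕ} (hρ : 1 ≤ ρ) :
    y ∈ G.distBall u ρ :=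
  (dist_eq_one_iff_adj.2 huy).trans_le hρ

def induceComplIso (A : Set V) (s : Set A) :
    (G.induce A).induce sᶜ ≃g G.induce (A \ (Subtype.val '' s)) where
  toFun x := ⟨x.1.1, x.1.2, by
    rintro ⟨a, ha, hav⟩
    exact x.2 (by rwa [show a = x.1 from Subtype.ext hav] at ha)⟩
  invFun y := ⟨⟨y.1, y.2.1⟩, fun hm => y.2.2 ⟨⟨y.1, y.2.1⟩, hm, rfl⟩⟩
  left_inv _ := rfl
  right_inv _ := rfl
  map_rel_iff' := Iff.rfl

lemma isTConnectedGraph_induce_iff [Finite V] {t : ℕ} (A : Set V) :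
    IsTConnectedGraph (G.induce A) t ↔
      t < A.ncard ∧ ∀ S : Set V, S.ncard < t → (G.induce (A \ S)).Connected := by
  rw [IsTConnectedGraph, Nat.card_coe_set_eq]
  refine and_congr_right fun _ => ⟨fun h S hS => ?_, fun h s hs => ?_⟩
  · have hcard : (Subtype.val ⁻¹' S : Set A).ncard < t := by
      refine lt_of_le_of_lt ?_ hS
      rw [← Set.ncard_image_of_injective _ Subtype.val_injective]
      exact Set.ncard_le_ncard (Set.image_preimage_subset _ _)
    have hc := (induceComplIso A _).connected_iff.1 (h _ hcard)
    rwa [Subtype.image_preimage_coe, Set.sdiff_self_inter] at hc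
  · refine (induceComplIso A s).connected_iff.2 (h _ ?_)
    rwa [Set.ncard_image_of_injective _ Subtype.val_injective]

lemma Walk.exists_walk_to_adj_end {x u : V} (p : G.Walk x u) (hxu : x ≠ u) :
    ∃ y, G.Adj y u ∧ ∃ q : G.Walk x y, u ∉ q.support ∧ q.support ⊆ p.support := by
  induction p with
  | nil => exact absurd rfl hxu
  | @cons x x' u hxx' p ih =>
    by_cases hx'u : x' = u
    · subst hx'u
      exact ⟨x, hxx', Walk.nil, by simpa using hxu.symm, by simp⟩
    · obtain ⟨y, hyu, q, huq, hqp⟩ := ih hx'u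
      refine ⟨y, hyu, Walk.cons hxx' q, ?_, ?_⟩
      · simpa [Walk.support_cons, huq] using hxu.symm
      · simpa [Walk.support_cons] using List.Subset.trans hqp (List.subset_cons_self _ _)

lemma exists_walk_of_induce_connected {A : Set V} (hA : (G.induce A).Connected) {x y : V}
    (hx : x ∈ A) (hy : y ∈ A) : ∃ p : G.Walk x y, ∀ z ∈ p.support, z ∈ A := by
  obtain ⟨p⟩ := hA.preconnected ⟨x, hx⟩ ⟨y, hy⟩
  refine ⟨p.map (Embedding.induce A).toHom, fun z hz => ?_⟩
  obtain ⟨a, -, rfl⟩ := List.mem_map.1 (Walk.support_map _ p ▸ hz)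
  exact a.2

variable [Finite V] {t ρ : ℕ}

lemma exists_walk_to_distBall_of_mem_distBall_succ (hρ : 1 ≤ ρ)
    (hball : ∀ w, ∀ S : Set V, S.ncard < t → (G.induce (G.distBall w ρ \ S)).Connected)
    {u x : V} {S : Set V} (hS : S.ncard < t) (hx : x ∈ G.distBall u (ρ + 1) \ S) :
    ∃ y ∈ G.distBall u ρ \ S, ∃ p : G.Walk x y, ∀ z ∈ p.support, z ∈ G.distBall u (ρ + 1) \ S := by
  by_cases hxρ : x ∈ G.distBall u ρ
  · exact ⟨x, ⟨hxρ, hx.2⟩, Walk.nil, by simpa using hx⟩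
  have hxu : x ≠ u := by rintro rfl; exact hxρ (self_mem_distBall x ρ)
  have hdist : G.dist u x = ρ + 1 := le_antisymm hx.1 (Nat.succ_le_of_lt (not_le.1 hxρ))
  obtain ⟨geodesic, hlen⟩ := exists_walk_of_dist_ne_zero (G := G) (u := u) (v := x) (by omega)
  cases geodesic with
  | nil => exact absurd rfl hxu
  | @cons _ v _ huv p => ?_
  have hpρ : p.length = ρ := by simpa [hdist] using hlen
  have hxv : x ∈ G.distBall v ρ := hpρ ▸ dist_le p
  have huv' : u ∈ G.distBall v ρ := mem_distBall_of_adj huv.symm hρ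
  have hS' : (S \ {u}).ncard < t := (Set.ncard_le_ncard Set.sdiff_subset).trans_lt hS
  obtain ⟨w, hw⟩ := exists_walk_of_induce_connected (hball v _ hS')
    (x := x) (y := u) ⟨hxv, fun h => hx.2 h.1⟩ ⟨huv', fun h => h.2 rfl⟩
  obtain ⟨y, hyu, q, huq, hqw⟩ := w.exists_walk_to_adj_end hxu
  have hq : ∀ z ∈ q.support, z ∈ G.distBall u (ρ + 1) \ S := fun z hz => by
    have hzu : z ≠ u := fun h => huq (h ▸ hz)
    obtain ⟨hzv, hzS⟩ := hw z (hqw hz)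
    exact ⟨distBall_subset_distBall_succ_of_adj huv ρ hzv, fun h => hzS ⟨h, hzu⟩⟩
  exact ⟨y, ⟨mem_distBall_of_adj hyu.symm hρ, (hq y q.end_mem_support).2⟩, q, hq⟩

lemma isTConnectedGraph_induce_distBall_succ (hρ : 1 ≤ ρ)
    (hball : ∀ w, IsTConnectedGraph (G.induce (G.distBall w ρ)) t) (u : V) :
    IsTConnectedGraph (G.induce (G.distBall u (ρ + 1))) t := by
  simp only [isTConnectedGraph_induce_iff] at hball ⊢
  refine ⟨(hball u).1.trans_le (Set.ncard_le_ncard (distBall_mono u ρ.le_succ)),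
    fun S hS => ?_⟩
  have hinner : G.distBall u ρ \ S ⊆ G.distBall u (ρ + 1) \ S :=
    Set.sdiff_subset_sdiff_left (distBall_mono u ρ.le_succ)
  obtain ⟨a, ha⟩ : (G.distBall u ρ \ S).Nonempty := Set.sdiff_nonempty.2 fun hsub =>
    (((hball u).1.trans_le (Set.ncard_le_ncard hsub)).trans hS).false
  refine induce_connected_of_patches a (hinner ha) fun {x} hx => ?_
  obtain ⟨y, hy, p, hp⟩ :=
    exists_walk_to_distBall_of_mem_distBall_succ hρ (fun w => (hball w).2) hS hx
  exact ⟨_, Set.union_subset hinner hp, Or.inl ha, Or.inr p.start_mem_support,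
    induce_union_connected ((hball u).2 S hS).preconnected
      p.connected_induce_support.preconnected ⟨y, hy, p.end_mem_support⟩ _ _⟩

end SimpleGraph

theorem stmt_3_general {V : Type*} [Fintype V] (G : SimpleGraph V) (r t : ℕ) (hr : 1 ≤ r)
    (hball : ∀ u : V, IsTConnectedGraph (G.induce {x : V | G.dist u x ≤ r}) t) :
    ∀ r' : ℕ, r < r' → ∀ u : V, IsTConnectedGraph (G.induce {x : V | G.dist u x ≤ r'}) t := by
  intro r' hr'
  replace hr' := hr'.le
  induction r', hr' using Nat.le_induction with
  | base => exact hball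
  | succ ρ hρ ih => exact isTConnectedGraph_induce_distBall_succ (hr.trans hρ) ih

/-- If every ball of radius `r ≥ 1` in a finite graph `G` is `t`-connected
(`t ≥ 2`), then for every `r' > r` every ball of radius `r'` is `t`-connected. -/
theorem stmt_3 {V : Type*} [Fintype V] (G : SimpleGraph V) (r t : ℕ) (hr : 1 ≤ r) (ht : 2 ≤ t)
    (hball : ∀ u : V, IsTConnectedGraph (G.induce {x : V | G.dist u x ≤ r}) t) :
    ∀ r' : ℕ, r < r' → ∀ u : V, IsTConnectedGraph (G.induce {x : V | G.dist u x ≤ r'}) t :=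
  stmt_3_general G r t hr hball
end

section
/- Let k ≥ 9 and let G be a finite connected k-regular simple graph in which every edge belongs to at least k − 4 triangles. Then G ∈ 𝒢(k), i.e., for every vertex v of G the number of vertices at distance exactly 2 from v is at most k. -/
open SimpleGraph

/-- A finite connected `k`-regular graph, `k ≥ 9`, in which every edge lies in
at least `k - 4` triangles belongs to 𝒢(k): every vertex has at most `k` vertices at
distance exactly 2. -/
theorem stmt_16 {V : Type*} [Fintype V] (G : SimpleGraph V) (k : ℕ) (hk : 9 ≤ k)
    (hconn : G.Connected) (hreg : ∀ v : V, (G.neighborSet v).ncard = k)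
    (htri : ∀ u v : V, G.Adj u v → k - 4 ≤ (G.neighborSet u ∩ G.neighborSet v).ncard) :
    ∀ v : V, {w : V | G.dist v w = 2}.ncard ≤ k := by
  classical
  intro v
  -- Finset versions of the hypotheses
  have hreg' : ∀ x : V, (G.neighborFinset x).card = k := by
    intro x
    rw [neighborFinset_def, ← Set.ncard_eq_toFinset_card', hreg x]
  have htri' : ∀ u w : V, G.Adj u w →
      k - 4 ≤ (G.neighborFinset u ∩ G.neighborFinset w).card := by
    intro u w h
    have h1 := htri u w h
    rwa [Set.ncard_eq_toFinset_card', Set.toFinset_inter, ← neighborFinset_def,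
      ← neighborFinset_def] at h1
  set Nv := G.neighborFinset v with hNv
  set D : Finset V := Finset.univ.filter (fun w => G.dist v w = 2) with hDdef
  have hgoal : {w : V | G.dist v w = 2}.ncard = D.card := by
    rw [Set.ncard_eq_toFinset_card']
    congr 1
    ext w
    simp [hDdef]
  rw [hgoal]
  -- basic facts about D
  have hDnadj : ∀ w ∈ D, ¬ G.Adj v w := by
    intro w hw hadj
    have hd : G.dist v w = 2 := by simpa [hDdef] using hw
    have : G.dist v w ≤ 1 := by
      have := SimpleGraph.dist_le (SimpleGraph.Walk.cons hadj SimpleGraph.Walk.nil)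
      simpa using this
    omega
  have hDnv : ∀ w ∈ D, w ≠ v := by
    intro w hw hwv
    have hd : G.dist v w = 2 := by simpa [hDdef] using hw
    rw [hwv, SimpleGraph.dist_self] at hd
    omega
  -- Fact A: each neighbor u of v has at most 3 neighbors outside N(v) ∪ {v}
  have factA : ∀ u : V, G.Adj v u →
      ((G.neighborFinset u) \ (Nv ∪ {v})).card ≤ 3 := by
    intro u hu
    have h1 : k - 4 ≤ (G.neighborFinset u ∩ Nv).card := htri' u v hu.symm
    have hvmem : v ∈ G.neighborFinset u := by
      rw [mem_neighborFinset]; exact hu.symm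
    have hvnot : v ∉ Nv := by
      rw [hNv, mem_neighborFinset]; exact fun h => G.irrefl h
    have hsub : (G.neighborFinset u ∩ Nv) ∪ {v} ⊆
        G.neighborFinset u ∩ (Nv ∪ {v}) := by
      intro x hx
      rcases Finset.mem_union.mp hx with hx | hx
      · rcases Finset.mem_inter.mp hx with ⟨h1x, h2x⟩
        exact Finset.mem_inter.mpr ⟨h1x, Finset.mem_union_left _ h2x⟩
      · rcases Finset.mem_singleton.mp hx with rfl
        exact Finset.mem_inter.mpr ⟨hvmem, Finset.mem_union_right _ (by simp)⟩
    have hdisj : Disjoint (G.neighborFinset u ∩ Nv) ({v} : Finset V) := by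
      simp only [Finset.disjoint_singleton_right, Finset.mem_inter]
      exact fun h => hvnot h.2
    have h2 : (G.neighborFinset u ∩ Nv).card + 1 ≤
        (G.neighborFinset u ∩ (Nv ∪ {v})).card := by
      have := Finset.card_le_card hsub
      rwa [Finset.card_union_of_disjoint hdisj, Finset.card_singleton] at this
    have h3 : ((G.neighborFinset u) \ (Nv ∪ {v})).card +
        (G.neighborFinset u ∩ (Nv ∪ {v})).card = k := by
      rw [Finset.card_sdiff_add_card_inter, hreg' u]
    omega
  -- Fact B: each w ∈ D has at least k - 6 neighbors in N(v)
  have factB : ∀ w ∈ D, ∀ u : V, G.Adj v u → G.Adj u w →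
      k - 6 ≤ (Nv.filter (fun x => G.Adj x w)).card := by
    intro w hw u hvu huw
    have hnadj := hDnadj w hw
    have hwv := hDnv w hw
    set S := (G.neighborFinset u) \ (Nv ∪ {v}) with hS
    have hwS : w ∈ S := by
      rw [hS, Finset.mem_sdiff, mem_neighborFinset]
      refine ⟨huw, ?_⟩
      simp only [Finset.mem_union, Finset.mem_singleton, hNv, mem_neighborFinset]
      push_neg
      exact ⟨fun h => hnadj h, hwv⟩
    have hScard : S.card ≤ 3 := factA u hvu
    have hsub : G.neighborFinset u ∩ G.neighborFinset w ⊆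
        (Nv.filter (fun x => G.Adj x w)) ∪ (S.erase w) := by
      intro x hx
      rcases Finset.mem_inter.mp hx with ⟨hxu, hxw⟩
      rw [mem_neighborFinset] at hxu hxw
      by_cases hxNv : x ∈ Nv
      · exact Finset.mem_union_left _ (Finset.mem_filter.mpr ⟨hxNv, hxw.symm⟩)
      · refine Finset.mem_union_right _ (Finset.mem_erase.mpr ⟨?_, ?_⟩)
        · rintro rfl; exact G.irrefl hxw.symm
        · rw [hS, Finset.mem_sdiff, mem_neighborFinset]
          refine ⟨hxu, ?_⟩
          simp only [Finset.mem_union, Finset.mem_singleton]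
          push_neg
          refine ⟨hxNv, ?_⟩
          rintro rfl
          exact hnadj hxw.symm
    have h1 : k - 4 ≤ ((Nv.filter (fun x => G.Adj x w)) ∪ (S.erase w)).card :=
      le_trans (htri' u w huw) (Finset.card_le_card hsub)
    have h2 : ((Nv.filter (fun x => G.Adj x w)) ∪ (S.erase w)).card ≤
        (Nv.filter (fun x => G.Adj x w)).card + (S.erase w).card :=
      Finset.card_union_le _ _
    have h3 : (S.erase w).card = S.card - 1 := Finset.card_erase_of_mem hwS
    have h4 : 1 ≤ S.card := Finset.card_pos.mpr ⟨w, hwS⟩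
    omega
  -- each w ∈ D has some u with Adj v u and Adj u w
  have hmid : ∀ w ∈ D, ∃ u : V, G.Adj v u ∧ G.Adj u w := by
    intro w hw
    have hd : G.dist v w = 2 := by simpa [hDdef] using hw
    obtain ⟨p, hp⟩ := (hconn v w).exists_walk_length_eq_dist
    rw [hd] at hp
    refine ⟨p.getVert 1, ?_, ?_⟩
    · have h0 := p.adj_getVert_succ (by omega : 0 < p.length)
      simpa using h0
    · have h1 := p.adj_getVert_succ (by omega : 1 < p.length)
      have h2 : p.getVert 2 = w := by
        rw [← hp]; exact p.getVert_length
      rwa [h2] at h1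
  -- upper bound on each fiber over N(v)
  have upper : ∀ u ∈ Nv, (D.filter (fun w => G.Adj u w)).card ≤ 3 := by
    intro u hu
    have hvu : G.Adj v u := by rwa [hNv, mem_neighborFinset] at hu
    have hsub : D.filter (fun w => G.Adj u w) ⊆
        (G.neighborFinset u) \ (Nv ∪ {v}) := by
      intro w hw
      rcases Finset.mem_filter.mp hw with ⟨hwD, huw⟩
      rw [Finset.mem_sdiff, mem_neighborFinset]
      refine ⟨huw, ?_⟩
      simp only [Finset.mem_union, Finset.mem_singleton, hNv, mem_neighborFinset]
      push_neg
      exact ⟨fun h => hDnadj w hwD h, hDnv w hwD⟩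
    exact le_trans (Finset.card_le_card hsub) (factA u hvu)
  -- double counting
  have hswap : ∑ u ∈ Nv, (D.filter (fun w => G.Adj u w)).card =
      ∑ w ∈ D, (Nv.filter (fun x => G.Adj x w)).card := by
    simp only [Finset.card_filter]
    rw [Finset.sum_comm]
  have hup : ∑ u ∈ Nv, (D.filter (fun w => G.Adj u w)).card ≤ 3 * k := by
    calc ∑ u ∈ Nv, (D.filter (fun w => G.Adj u w)).card
        ≤ ∑ _u ∈ Nv, 3 := Finset.sum_le_sum upper
      _ = 3 * k := by rw [Finset.sum_const, hreg' v, smul_eq_mul, mul_comm]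
  have hlow : (k - 6) * D.card ≤ ∑ w ∈ D, (Nv.filter (fun x => G.Adj x w)).card := by
    calc (k - 6) * D.card = ∑ _w ∈ D, (k - 6) := by
          rw [Finset.sum_const, smul_eq_mul, mul_comm]
      _ ≤ ∑ w ∈ D, (Nv.filter (fun x => G.Adj x w)).card := by
          refine Finset.sum_le_sum ?_
          intro w hw
          obtain ⟨u, hvu, huw⟩ := hmid w hw
          exact factB w hw u hvu huw
  have hmain : (k - 6) * D.card ≤ 3 * k := by
    calc (k - 6) * D.card ≤ ∑ w ∈ D, (Nv.filter (fun x => G.Adj x w)).card := hlow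
      _ = ∑ u ∈ Nv, (D.filter (fun w => G.Adj u w)).card := hswap.symm
      _ ≤ 3 * k := hup
  have hfin : (k - 6) * D.card ≤ (k - 6) * k := by
    have : 3 * k ≤ (k - 6) * k := Nat.mul_le_mul_right k (by omega)
    omega
  exact Nat.le_of_mul_le_mul_left hfin (by omega)
end

section
/- For all integers k ≥ 3 and n ≥ 2, the graph H(k,n) is a connected k-regular Hamiltonian graph on n(k+1) vertices, H(k,n) belongs to 𝒢(k), and H(k,n) is not locally connected. -/
open SimpleGraph

/-- The graph `H(k,n)` (0-indexed): vertices are `u_i = .inl (.inl i)`, `v_i = .inl (.inr i)`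
for `i : Fin n`, and the clique `W_i = {.inr (i, j) | j : Fin (k-1)}`.  Each `W_i` is complete,
`u_i` and `v_i` are joined to all of `W_i`, and `u_i` is joined to `v_{(i+1) mod n}`
(giving the edges `u_i v_{i+1}` for `i = 1, …, n-1` and `u_n v_1` in 1-indexed notation). -/
def HGraph (k n : ℕ) : SimpleGraph ((Fin n ⊕ Fin n) ⊕ Fin n × Fin (k - 1)) :=
  SimpleGraph.fromRel (fun a b =>
    (∃ (i : Fin n) (j j' : Fin (k - 1)), a = Sum.inr (i, j) ∧ b = Sum.inr (i, j')) ∨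
    (∃ (i : Fin n) (j : Fin (k - 1)), a = Sum.inl (Sum.inl i) ∧ b = Sum.inr (i, j)) ∨
    (∃ (i : Fin n) (j : Fin (k - 1)), a = Sum.inl (Sum.inr i) ∧ b = Sum.inr (i, j)) ∨
    (∃ i i' : Fin n, a = Sum.inl (Sum.inl i) ∧ b = Sum.inl (Sum.inr i') ∧
      (i.val + 1) % n = i'.val))

/-!
`H(k,n)` is a ring of `n` blocks, block `i` being `K_{k+1}` on `{vᵢ} ∪ Wᵢ ∪ {uᵢ}` minus the edge
`uᵢvᵢ`, and consecutive blocks are joined by the edge `uᵢvᵢ₊₁`. Running through every block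
`vᵢ → Wᵢ → uᵢ` and stepping on to `vᵢ₊₁` is a Hamiltonian cycle; read as a periodic sequence
of vertices, it is a bijective homomorphism from the cycle graph. The vertices at distance two
from `uᵢ` are `vᵢ` and `Wᵢ₊₁`, those from `vᵢ` are `uᵢ` and `Wᵢ₋₁`, and those from a vertex of
`Wᵢ` are `vᵢ₊₁` and `uᵢ₋₁`: at most `k` in every case. In the neighbourhood of `uᵢ` the vertex
`vᵢ₊₁` is isolated, because its other neighbours lie in `Wᵢ₊₁`.
-/

namespace SimpleGraph

variable {V W : Type*} {G : SimpleGraph V} {G' : SimpleGraph W}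

lemma cycleGraph_isHamiltonian {N : ℕ} (hN : 3 ≤ N) : (cycleGraph N).IsHamiltonian := by
  obtain ⟨m, rfl⟩ : ∃ m, N = m + 3 := ⟨N - 3, by omega⟩
  refine fun _ ↦ ⟨0, cycleGraph.cycle m, cycleGraph.isCycle_cycle, ?_⟩
  rw [Walk.isHamiltonian_iff_isPath_and_length_eq]
  refine ⟨cycleGraph.isPath_tail_cycle, ?_⟩
  simp [Walk.length_tail]

lemma IsHamiltonian.of_hom_bijective [Fintype V] [Fintype W] [DecidableEq V] [DecidableEq W]
    (f : G →g G') (hf : Function.Bijective f) (hG : G.IsHamiltonian) : G'.IsHamiltonian := by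
  intro hW
  obtain ⟨a, p, hp⟩ := hG (by rwa [Fintype.card_of_bijective hf])
  exact ⟨f a, p.map f, hp.map hf⟩

def cycleGraphHomOfPeriodic {N : ℕ} (f : ℕ → V) (hper : Function.Periodic f N)
    (hadj : ∀ t, G.Adj (f t) (f (t + 1))) : cycleGraph N →g G where
  toFun i := f i
  map_rel' {a b} hab := by
    obtain _ | N := N
    · exact a.elim0
    have eq_succ_of_sub {a b : Fin (N + 1)} (h : (a - b).val = 1) : f a = f (b + 1) := by
      rw [← sub_add_cancel a b, Fin.val_add, h, add_comm, hper.map_mod_nat]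
    rcases cycleGraph_adj'.mp hab with h | h
    · rw [eq_succ_of_sub h]
      exact (hadj b).symm
    · rw [eq_succ_of_sub h]
      exact hadj a

lemma isHamiltonian_of_periodic [Fintype V] [DecidableEq V] {N : ℕ} (hN : 3 ≤ N)
    (hcard : Fintype.card V = N) (f : ℕ → V) (hper : Function.Periodic f N)
    (hadj : ∀ t, G.Adj (f t) (f (t + 1))) (hf : Function.Surjective f) : G.IsHamiltonian := by
  refine (cycleGraph_isHamiltonian hN).of_hom_bijective (cycleGraphHomOfPeriodic f hper hadj) ?_
  refine (Fintype.bijective_iff_surjective_and_card _).mpr ⟨fun x ↦ ?_, by simp [hcard]⟩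
  obtain ⟨t, rfl⟩ := hf x
  exact ⟨⟨t % N, Nat.mod_lt _ (by omega)⟩, hper.map_mod_nat t⟩

lemma setOf_dist_eq_two_subset {u : V} {S : Set V}
    (h : ∀ x y, G.Adj u x → G.Adj x y → y = u ∨ G.Adj u y ∨ y ∈ S) :
    {y | G.dist u y = 2} ⊆ S := by
  intro y hy
  obtain ⟨hne, hnadj, x, hx⟩ := edist_eq_two_iff.mp ((ENat.toNat_eq_iff two_ne_zero).mp hy)
  rw [mem_commonNeighbors] at hx
  rcases h x y hx.1 hx.2.symm with rfl | h | h
  · exact absurd rfl hne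
  · exact absurd h hnadj
  · exact h

lemma not_connected_induce_of_forall_not_adj {s : Set V} {x y : V} (hx : x ∈ s) (hy : y ∈ s)
    (hxy : x ≠ y) (h : ∀ z ∈ s, ¬ G.Adj x z) : ¬ (G.induce s).Connected := by
  intro hc
  obtain ⟨p⟩ := hc.preconnected ⟨x, hx⟩ ⟨y, hy⟩
  cases p with
  | nil => exact hxy rfl
  | cons ha _ => exact h _ (Subtype.prop _) ha

end SimpleGraph

namespace HGraph

variable {k n : ℕ}

abbrev u (k : ℕ) (i : Fin n) : (Fin n ⊕ Fin n) ⊕ Fin n × Fin (k - 1) := .inl (.inl i)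
abbrev v (k : ℕ) (i : Fin n) : (Fin n ⊕ Fin n) ⊕ Fin n × Fin (k - 1) := .inl (.inr i)
abbrev w (i : Fin n) (j : Fin (k - 1)) : (Fin n ⊕ Fin n) ⊕ Fin n × Fin (k - 1) := .inr (i, j)

section Adjacency

variable {i i' : Fin n} {j j' : Fin (k - 1)}

@[simp] lemma adj_w_w : (HGraph k n).Adj (w i j) (w i' j') ↔ i = i' ∧ j ≠ j' := by
  simp [HGraph]
  aesop

@[simp] lemma adj_u_w : (HGraph k n).Adj (u k i) (w i' j) ↔ i = i' := by simp [HGraph, eq_comm]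

@[simp] lemma adj_w_u : (HGraph k n).Adj (w i' j) (u k i) ↔ i = i' := by simp [HGraph, eq_comm]

@[simp] lemma adj_v_w : (HGraph k n).Adj (v k i) (w i' j) ↔ i = i' := by simp [HGraph, eq_comm]

@[simp] lemma adj_w_v : (HGraph k n).Adj (w i' j) (v k i) ↔ i = i' := by simp [HGraph, eq_comm]

@[simp] lemma not_adj_u_u : ¬ (HGraph k n).Adj (u k i) (u k i') := by simp [HGraph]

@[simp] lemma not_adj_v_v : ¬ (HGraph k n).Adj (v k i) (v k i') := by simp [HGraph]

@[simp] lemma adj_u_v [NeZero n] : (HGraph k n).Adj (u k i) (v k i') ↔ i' = i + 1 := by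
  simp [HGraph]
  simp [Fin.ext_iff, Fin.val_add, eq_comm]

@[simp] lemma adj_v_u [NeZero n] : (HGraph k n).Adj (v k i) (u k i') ↔ i = i' + 1 := by
  rw [adj_comm, adj_u_v]

end Adjacency

lemma card_vertex (hk : 1 ≤ k) :
    Fintype.card ((Fin n ⊕ Fin n) ⊕ Fin n × Fin (k - 1)) = n * (k + 1) := by
  simp only [Fintype.card_sum, Fintype.card_prod, Fintype.card_fin]
  obtain ⟨m, rfl⟩ : ∃ m, k = m + 1 := ⟨k - 1, by omega⟩
  simp only [Nat.add_sub_cancel]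
  ring

lemma w_injective (i : Fin n) : Function.Injective (w (k := k) i) := fun _ _ h ↦ by
  simpa using h

lemma ncard_range_w (i : Fin n) : (Set.range (w (k := k) i)).ncard = k - 1 := by
  rw [Set.ncard_range_of_injective (w_injective i), Nat.card_eq_fintype_card, Fintype.card_fin]

lemma ncard_insert_range_w_le (hk : 1 ≤ k) (x) (i : Fin n) :
    (insert x (Set.range (w (k := k) i))).ncard ≤ k := by
  grw [Set.ncard_insert_le, ncard_range_w]
  omega

lemma neighborSet_w (i : Fin n) (j : Fin (k - 1)) :
    (HGraph k n).neighborSet (w i j) =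
      insert (u k i) (insert (v k i) (Set.range (w i) \ {w i j})) := by
  ext ((x | x) | ⟨x, j'⟩) <;> simp +contextual [eq_comm]

def block (k : ℕ) (i : Fin n) (r : ℕ) : (Fin n ⊕ Fin n) ⊕ Fin n × Fin (k - 1) :=
  if h₀ : r = 0 then v k i else if h : r < k then w i ⟨r - 1, by omega⟩ else u k i

lemma adj_block_succ (hk : 2 ≤ k) (i : Fin n) {r : ℕ} (hr : r < k) :
    (HGraph k n).Adj (block k i r) (block k i (r + 1)) := by
  unfold block
  split_ifs <;> (try simp [Fin.ext_iff]) <;> omega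

section NeZero

variable [NeZero n]

lemma neighborSet_u (i : Fin n) :
    (HGraph k n).neighborSet (u k i) = insert (v k (i + 1)) (Set.range (w i)) := by
  ext ((x | x) | ⟨x, j⟩) <;> simp [eq_comm]

lemma neighborSet_v (i : Fin n) :
    (HGraph k n).neighborSet (v k i) = insert (u k (i - 1)) (Set.range (w i)) := by
  ext ((x | x) | ⟨x, j⟩) <;> simp [eq_comm, eq_sub_iff_add_eq]

lemma ncard_neighborSet (hk : 2 ≤ k) (x) : ((HGraph k n).neighborSet x).ncard = k := by
  rcases x with (i | i) | ⟨i, j⟩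
  · rw [neighborSet_u, Set.ncard_insert_of_notMem (by simp), ncard_range_w]
    omega
  · rw [neighborSet_v, Set.ncard_insert_of_notMem (by simp), ncard_range_w]
    omega
  · rw [neighborSet_w, Set.ncard_insert_of_notMem (by simp), Set.ncard_insert_of_notMem (by simp),
      Set.ncard_sdiff_singleton_of_mem (Set.mem_range_self j), ncard_range_w]
    omega

lemma ncard_setOf_dist_eq_two_le (hk : 2 ≤ k) (x) :
    {y | (HGraph k n).dist x y = 2}.ncard ≤ k := by
  rcases x with (i | i) | ⟨i, j⟩
  · refine (Set.ncard_le_ncard (setOf_dist_eq_two_subset ?_)).trans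
      (ncard_insert_range_w_le (by omega) (v k i) (i + 1))
    rintro ((x | x) | ⟨x, j⟩) ((y | y) | ⟨y, j'⟩) <;> simp <;> grind
  · refine (Set.ncard_le_ncard (setOf_dist_eq_two_subset ?_)).trans
      (ncard_insert_range_w_le (by omega) (u k i) (i - 1))
    rintro ((x | x) | ⟨x, j⟩) ((y | y) | ⟨y, j'⟩) <;> simp <;> grind
  · refine (Set.ncard_le_ncard
      (setOf_dist_eq_two_subset (S := {v k (i + 1), u k (i - 1)}) ?_)).trans
      ((Set.ncard_insert_le _ _).trans (by simp; omega))
    rintro ((x | x) | ⟨x, j⟩) ((y | y) | ⟨y, j'⟩) <;> simp <;> grind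

def tour (k n : ℕ) [NeZero n] (t : ℕ) : (Fin n ⊕ Fin n) ⊕ Fin n × Fin (k - 1) :=
  block k (Fin.ofNat n (t / (k + 1))) (t % (k + 1))

lemma tour_eq (q r : ℕ) (hr : r ≤ k) : tour k n ((k + 1) * q + r) = block k (Fin.ofNat n q) r := by
  rw [tour, Nat.mul_add_div (by omega), Nat.mul_add_mod, Nat.div_eq_of_lt (by omega),
    Nat.mod_eq_of_lt (by omega), add_zero]

lemma tour_periodic : Function.Periodic (tour k n) (n * (k + 1)) := fun t ↦ by
  rw [tour, tour, mul_comm n, Nat.add_mul_div_left _ _ (Nat.succ_pos k), Nat.add_mul_mod_self_left]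
  congr 1
  ext
  simp

lemma adj_tour_succ (hk : 2 ≤ k) (t : ℕ) : (HGraph k n).Adj (tour k n t) (tour k n (t + 1)) := by
  obtain ⟨q, r, hr, rfl⟩ : ∃ q r, r ≤ k ∧ t = (k + 1) * q + r :=
    ⟨t / (k + 1), t % (k + 1), Nat.lt_succ_iff.mp (Nat.mod_lt _ (by omega)),
      (Nat.div_add_mod _ _).symm⟩
  rcases hr.lt_or_eq with hr | hrk
  · rw [add_assoc, tour_eq q r hr.le, tour_eq q (r + 1) hr]
    exact adj_block_succ hk _ hr
  · obtain rfl : k = r := hrk.symm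
    rw [tour_eq q k le_rfl, show (k + 1) * q + k + 1 = (k + 1) * (q + 1) + 0 by ring,
      tour_eq _ _ (Nat.zero_le _)]
    simp [block, show k ≠ 0 by omega, Fin.ext_iff, Fin.val_add]

lemma tour_surjective (hk : 2 ≤ k) : Function.Surjective (tour k n) := by
  rintro ((i | i) | ⟨i, j⟩)
  · exact ⟨(k + 1) * i + k, by rw [tour_eq _ _ le_rfl]; simp [block]; omega⟩
  · exact ⟨(k + 1) * i + 0, by rw [tour_eq _ _ (Nat.zero_le _)]; simp [block]⟩
  · refine ⟨(k + 1) * i + (j + 1), ?_⟩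
    rw [tour_eq _ _ (by omega)]
    simp [block]
    omega

lemma isHamiltonian (hk : 2 ≤ k) : (HGraph k n).IsHamiltonian :=
  isHamiltonian_of_periodic
    (le_trans (by omega) (Nat.le_mul_of_pos_left (k + 1) (Nat.pos_of_neZero n)))
    (card_vertex (by omega)) (tour k n) tour_periodic (adj_tour_succ hk) (tour_surjective hk)

end NeZero

lemma not_graphLocallyConnected (hk : 2 ≤ k) (hn : 2 ≤ n) :
    ¬ GraphLocallyConnected (HGraph k n) := by
  have : NeZero n := ⟨by omega⟩
  have h10 : (1 : Fin n) ≠ 0 := by simp [Fin.ext_iff, Nat.mod_eq_of_lt (show 1 < n by omega)]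
  intro h
  refine not_connected_induce_of_forall_not_adj (x := v k (0 + 1)) (y := w 0 ⟨0, by omega⟩)
    (by simp) (by simp) (by simp) ?_ (h (u k 0))
  rintro ((z | z) | ⟨z, j⟩) hz <;> simp at hz ⊢
  subst hz
  exact h10

end HGraph

/-- For `k ≥ 3`, `n ≥ 2`, the graph `H(k,n)` is a connected `k`-regular
Hamiltonian graph on `n(k+1)` vertices, belongs to 𝒢(k), and is not locally connected. -/
theorem stmt_17 (k n : ℕ) (hk : 3 ≤ k) (hn : 2 ≤ n) :
    (HGraph k n).Connected ∧
    (∀ v, ((HGraph k n).neighborSet v).ncard = k) ∧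
    (HGraph k n).IsHamiltonian ∧
    Fintype.card ((Fin n ⊕ Fin n) ⊕ Fin n × Fin (k - 1)) = n * (k + 1) ∧
    InGClass (HGraph k n) k ∧
    ¬ GraphLocallyConnected (HGraph k n) := by
  have : NeZero n := ⟨by omega⟩
  have hHam := HGraph.isHamiltonian (n := n) (show 2 ≤ k by omega)
  have hdeg := HGraph.ncard_neighborSet (n := n) (show 2 ≤ k by omega)
  exact ⟨hHam.connected, hdeg, hHam, HGraph.card_vertex (by omega),
    ⟨hHam.connected, hdeg, HGraph.ncard_setOf_dist_eq_two_le (by omega)⟩,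
    HGraph.not_graphLocallyConnected (by omega) hn⟩
end

section
/- For every integer k ≥ 3, the graph obtained from the complete bipartite graph K_{k+1,k+1} by deleting a perfect matching is a connected k-regular Hamiltonian graph that belongs to 𝒢(k) and is not claw-free. -/
/-!
The perfect matching pairs each left vertex `a` with a right vertex `σ a`, so the graph is the
crown graph: `a` and `b` on opposite sides are adjacent iff `b ≠ σ a`. It is `k`-regular because
each vertex loses exactly its matching edge. For `k + 1 ≥ 3` the closed walk
`a₀, σ a₂, a₁, σ a₃, a₂, …` (indices mod `k + 1`) is a Hamiltonian cycle. Being bipartite, the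
graph has all vertices at distance two from `u` on the side of `u`, so at most `k` of them, and it
is triangle-free, so any three neighbours of a vertex span an induced claw.
-/

open SimpleGraph

open Function Sum

namespace SimpleGraph

variable {V α β : Type*} {G : SimpleGraph V}

theorem neighborSet_deleteEdges_edgeSet (M : G.Subgraph) (v : V) :
    (G.deleteEdges M.edgeSet).neighborSet v = G.neighborSet v \ M.neighborSet v := by
  ext w
  simp

theorem Subgraph.IsPerfectMatching.ncard_neighborSet {M : G.Subgraph}
    (hM : M.IsPerfectMatching) (v : V) : (M.neighborSet v).ncard = 1 := by
  obtain ⟨w, hw, huniq⟩ := hM.1 (hM.2 v)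
  exact Set.ncard_eq_one.2 ⟨w, Set.ext fun x => ⟨huniq x, fun h => h ▸ hw⟩⟩

theorem Subgraph.IsPerfectMatching.ncard_neighborSet_deleteEdges [Finite V] {M : G.Subgraph}
    (hM : M.IsPerfectMatching) (v : V) :
    ((G.deleteEdges M.edgeSet).neighborSet v).ncard = (G.neighborSet v).ncard - 1 := by
  rw [neighborSet_deleteEdges_edgeSet, Set.ncard_sdiff (M.neighborSet_subset v),
    hM.ncard_neighborSet]

theorem completeBipartiteGraph_neighborSet_inl (a : α) :
    (completeBipartiteGraph α β).neighborSet (inl a) = Set.range inr := by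
  ext (_ | _) <;> simp

theorem completeBipartiteGraph_neighborSet_inr (b : β) :
    (completeBipartiteGraph α β).neighborSet (inr b) = Set.range inl := by
  ext (_ | _) <;> simp

theorem ncard_neighborSet_completeBipartiteGraph_self (v : α ⊕ α) :
    ((completeBipartiteGraph α α).neighborSet v).ncard = Nat.card α := by
  rcases v with a | a
  · rw [completeBipartiteGraph_neighborSet_inl, Set.ncard_range_of_injective inr_injective]
  · rw [completeBipartiteGraph_neighborSet_inr, Set.ncard_range_of_injective inl_injective]

theorem completeBipartiteGraph_adj_swap {u v w : α ⊕ α}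
    (hu : (completeBipartiteGraph α α).Adj u w) (hv : (completeBipartiteGraph α α).Adj v w) :
    (completeBipartiteGraph α α).Adj u.swap v := by
  rcases u with _ | _ <;> rcases v with _ | _ <;> rcases w with _ | _ <;> simp_all

theorem setOf_dist_eq_two_subset_s19 {G : SimpleGraph (α ⊕ α)}
    (hG : G ≤ completeBipartiteGraph α α) (u : α ⊕ α) :
    {v | G.dist u v = 2} ⊆ (completeBipartiteGraph α α).neighborSet u.swap \ {u} := by
  intro v hv
  have hreach : G.Reachable u v := Reachable.of_dist_ne_zero (by simp_all)
  obtain ⟨hne, -, w, hw⟩ := edist_eq_two_iff.1 <| by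
    rw [← hreach.coe_dist_eq_edist, show G.dist u v = 2 from hv]; rfl
  rw [mem_commonNeighbors] at hw
  exact ⟨completeBipartiteGraph_adj_swap (hG hw.1) (hG hw.2), hne.symm⟩

theorem ncard_setOf_dist_eq_two_le [Finite α] {G : SimpleGraph (α ⊕ α)}
    (hG : G ≤ completeBipartiteGraph α α) (u : α ⊕ α) :
    {v | G.dist u v = 2}.ncard ≤ Nat.card α - 1 := by
  have hu : u ∈ (completeBipartiteGraph α α).neighborSet u.swap := by
    rcases u with _ | _ <;> simp
  calc {v | G.dist u v = 2}.ncard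
      ≤ ((completeBipartiteGraph α α).neighborSet u.swap \ {u}).ncard :=
        Set.ncard_le_ncard (setOf_dist_eq_two_subset_s19 hG u)
    _ = Nat.card α - 1 := by
        rw [Set.ncard_sdiff_singleton_of_mem hu, ncard_neighborSet_completeBipartiteGraph_self]

theorem not_graphClawFree_of_cliqueFree_three (hG : G.CliqueFree 3) {u : V}
    (hu : 3 ≤ (G.neighborSet u).ncard) : ¬ GraphClawFree G := by
  classical
  obtain ⟨t, ht, htcard⟩ := Set.exists_subset_card_eq hu
  obtain ⟨x, y, z, hxy, hxz, hyz, rfl⟩ := Set.ncard_eq_three.1 htcard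
  have hleaf : ∀ i, G.Adj u (![x, y, z] i) := by
    intro i; fin_cases i <;> exact ht (by simp)
  have hindep : ∀ i j, ¬ G.Adj (![x, y, z] i) (![x, y, z] j) := fun i j hij =>
    hG {u, _, _} (is3Clique_triple_iff.2 ⟨hleaf i, hleaf j, hij⟩)
  have hinj : Injective ![x, y, z] := by
    intro i j hij; fin_cases i <;> fin_cases j <;> simp_all [eq_comm]
  have hf : Injective (Sum.elim (fun _ : Fin 1 => u) ![x, y, z]) :=
    Injective.sumElim (fun _ _ _ => Subsingleton.elim _ _) hinj fun _ i => (hleaf i).ne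
  refine not_isEmpty_iff.2 ⟨⟨⟨_, hf⟩, ?_⟩⟩
  rintro (i | i) (j | j) <;> simp only [Function.Embedding.coeFn_mk, Sum.elim_inl, Sum.elim_inr]
  · simp
  · simpa using hleaf j
  · simpa using (hleaf i).symm
  · simpa using hindep i j

theorem isHamiltonian_of_cycleGraph_isContained [Fintype V] [DecidableEq V]
    (hV : 3 ≤ Fintype.card V) (hC : cycleGraph (Fintype.card V) ⊑ G) : G.IsHamiltonian := by
  intro _
  obtain ⟨v, p, hp, hlen⟩ := (cycleGraph_isContained_iff hV).1 hC
  exact ⟨v, p, Walk.isHamiltonianCycle_iff_isCycle_and_length_eq.2 ⟨hp, hlen⟩⟩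

theorem cycleGraph_isContained_of_periodic {m : ℕ} {g : ℕ → V} (hper : Periodic g m)
    (hinj : Set.InjOn g (Set.Iio m)) (hadj : ∀ t, G.Adj (g t) (g (t + 1))) :
    cycleGraph m ⊑ G := by
  have hsucc : ∀ u v : Fin m, (u - v).val = 1 → G.Adj (g v) (g u) := by
    intro u v huv
    have : NeZero m := ⟨fun h => (h ▸ u).elim0⟩
    have : u.val = (v.val + 1) % m := by
      rw [← sub_add_cancel u v, Fin.val_add, huv, add_comm]
    rw [this, hper.map_mod_nat]
    exact hadj v
  refine ⟨⟨⟨fun i => g i, fun {u v} huv => ?_⟩, fun u v huv => Fin.ext (hinj u.isLt v.isLt huv)⟩⟩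
  rcases cycleGraph_adj'.1 huv with h | h
  · exact (hsucc u v h).symm
  · exact hsucc v u h

section CrownCycle

open Fin.NatCast

theorem _root_.Fin.natCast_injOn_Iio (N : ℕ) [NeZero N] :
    Set.InjOn (fun a : ℕ => (a : Fin N)) (Set.Iio N) := by
  intro i hi j hj h
  simpa [Fin.ext_iff, Nat.mod_eq_of_lt hi, Nat.mod_eq_of_lt hj] using h

variable {N : ℕ} [NeZero N] (σ : Fin N → Fin N)

def crownCycle (t : ℕ) : Fin N ⊕ Fin N :=
  if Even t then inl ((t / 2 : ℕ) : Fin N) else inr (σ ((t / 2 + 2 : ℕ) : Fin N))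

theorem crownCycle_two_mul (j : ℕ) : crownCycle σ (2 * j) = inl (j : Fin N) := by
  simp [crownCycle]

theorem crownCycle_two_mul_add_one (j : ℕ) :
    crownCycle σ (2 * j + 1) = inr (σ ((j + 2 : ℕ) : Fin N)) := by
  simp [crownCycle, Nat.mul_add_div]

theorem crownCycle_periodic : Periodic (crownCycle σ) (N + N) := by
  intro t
  obtain ⟨j, rfl | rfl⟩ := Nat.even_or_odd' t
  · rw [← two_mul, ← mul_add, crownCycle_two_mul, crownCycle_two_mul]
    simp
  · rw [← two_mul, add_right_comm, ← mul_add, crownCycle_two_mul_add_one,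
      crownCycle_two_mul_add_one]
    simp

variable {σ}

theorem crownCycle_injOn (hσ : Injective σ) :
    Set.InjOn (crownCycle σ) (Set.Iio (N + N)) := by
  intro s hs t ht hst
  simp only [Set.mem_Iio] at hs ht
  obtain ⟨i, rfl | rfl⟩ := Nat.even_or_odd' s <;> obtain ⟨j, rfl | rfl⟩ := Nat.even_or_odd' t
  · rw [crownCycle_two_mul, crownCycle_two_mul] at hst
    rw [Fin.natCast_injOn_Iio N (by simp; omega) (by simp; omega) (inl_injective hst)]
  · simp [crownCycle_two_mul, crownCycle_two_mul_add_one] at hst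
  · simp [crownCycle_two_mul, crownCycle_two_mul_add_one] at hst
  · rw [crownCycle_two_mul_add_one, crownCycle_two_mul_add_one] at hst
    have hij := hσ (inr_injective hst)
    push_cast at hij
    rw [Fin.natCast_injOn_Iio N (by simp; omega) (by simp; omega) (add_right_cancel hij)]

theorem crownCycle_adj_succ (hN : 3 ≤ N) {G : SimpleGraph (Fin N ⊕ Fin N)} (hσ : Injective σ) (hG : ∀ a b, b ≠ σ a → G.Adj (inl a) (inr b)) (t : ℕ) :
    G.Adj (crownCycle σ t) (crownCycle σ (t + 1)) := by
  obtain ⟨j, rfl | rfl⟩ := Nat.even_or_odd' t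
  · rw [crownCycle_two_mul, crownCycle_two_mul_add_one]
    refine hG _ _ fun h => ?_
    have hj := hσ h
    push_cast at hj
    simp [Fin.ext_iff, Nat.mod_eq_of_lt (show 2 < N by omega)] at hj
  · rw [show 2 * j + 1 + 1 = 2 * (j + 1) by ring, crownCycle_two_mul, crownCycle_two_mul_add_one]
    refine (hG _ _ fun h => ?_).symm
    have hj := hσ h
    push_cast at hj
    simp [Fin.ext_iff, Nat.mod_eq_of_lt (show 2 < N by omega),
      Nat.mod_eq_of_lt (show 1 < N by omega)] at hj

end CrownCycle

theorem isHamiltonian_of_forall_ne_adj_inl_inr {N : ℕ} (hN : 3 ≤ N)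
    {G : SimpleGraph (Fin N ⊕ Fin N)} {σ : Fin N → Fin N} (hσ : Injective σ)
    (hG : ∀ a b, b ≠ σ a → G.Adj (inl a) (inr b)) : G.IsHamiltonian := by
  have : NeZero N := ⟨by omega⟩
  have hcard : Fintype.card (Fin N ⊕ Fin N) = N + N := by simp
  refine isHamiltonian_of_cycleGraph_isContained (by omega) ?_
  rw [hcard]
  exact cycleGraph_isContained_of_periodic (crownCycle_periodic σ) (crownCycle_injOn hσ)
    (crownCycle_adj_succ hN hσ hG)

theorem Subgraph.IsPerfectMatching.exists_injective_forall_ne_deleteEdges_adj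
    {M : (completeBipartiteGraph α β).Subgraph} (hM : M.IsPerfectMatching) :
    ∃ σ : α → β, Injective σ ∧ ∀ a b, b ≠ σ a →
      ((completeBipartiteGraph α β).deleteEdges M.edgeSet).Adj (inl a) (inr b) := by
  have hpartner : ∀ a, ∃ b, M.Adj (inl a) (inr b) := by
    intro a
    obtain ⟨w, hw, -⟩ := hM.1 (hM.2 (inl a))
    rcases w with c | b
    · simpa using M.adj_sub hw
    · exact ⟨b, hw⟩
  choose σ hσ using hpartner
  refine ⟨σ, fun a a' h => inl_injective (hM.1.eq_of_adj_right (hσ a) (h ▸ hσ a')), ?_⟩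
  intro a b hb
  rw [SimpleGraph.deleteEdges_adj, Subgraph.mem_edgeSet]
  exact ⟨by simp, fun hab => hb (inr_injective (hM.1.eq_of_adj_left hab (hσ a)))⟩

end SimpleGraph

/-- For `k ≥ 3`, deleting a perfect matching from the complete bipartite graph
`K_{k+1,k+1}` yields a connected `k`-regular Hamiltonian graph belonging to 𝒢(k) that is not
claw-free. -/
theorem stmt_19 (k : ℕ) (hk : 3 ≤ k)
    (M : SimpleGraph.Subgraph (completeBipartiteGraph (Fin (k + 1)) (Fin (k + 1))))
    (hM : M.IsPerfectMatching) :
    ((completeBipartiteGraph (Fin (k + 1)) (Fin (k + 1))).deleteEdges M.edgeSet).Connected ∧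
    (∀ v, (((completeBipartiteGraph (Fin (k + 1)) (Fin (k + 1))).deleteEdges
        M.edgeSet).neighborSet v).ncard = k) ∧
    ((completeBipartiteGraph (Fin (k + 1)) (Fin (k + 1))).deleteEdges M.edgeSet).IsHamiltonian ∧
    InGClass ((completeBipartiteGraph (Fin (k + 1)) (Fin (k + 1))).deleteEdges M.edgeSet) k ∧
    ¬ GraphClawFree ((completeBipartiteGraph (Fin (k + 1)) (Fin (k + 1))).deleteEdges
        M.edgeSet) := by
  set G := (completeBipartiteGraph (Fin (k + 1)) (Fin (k + 1))).deleteEdges M.edgeSet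
  have hGK : G ≤ completeBipartiteGraph _ _ := deleteEdges_le _
  have hreg : ∀ v, (G.neighborSet v).ncard = k := fun v => by
    rw [hM.ncard_neighborSet_deleteEdges, ncard_neighborSet_completeBipartiteGraph_self,
      Nat.card_fin, Nat.add_sub_cancel]
  obtain ⟨σ, hσ, hadj⟩ := hM.exists_injective_forall_ne_deleteEdges_adj
  have hham : G.IsHamiltonian := isHamiltonian_of_forall_ne_adj_inl_inr (by omega) hσ hadj
  have hdist : ∀ u, {v | G.dist u v = 2}.ncard ≤ k := fun u =>
    (ncard_setOf_dist_eq_two_le hGK u).trans (by simp)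
  have hclique : G.CliqueFree 3 :=
    ((CompleteBipartiteGraph.bicoloring _ _).colorable.mono_left hGK).cliqueFree (by simp)
  exact ⟨hham.connected, hreg, hham, ⟨hham.connected, hreg, hdist⟩,
    not_graphClawFree_of_cliqueFree_three hclique (u := inl 0) (by rw [hreg]; omega)⟩
end
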